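/- Let d₋ < 0 < d₊ and d : Fin m → ℝ with each dᵢ ∈ (-∞, d₋] ∪ [d₊, ∞), such that d₊ = min over {i : dᵢ > 0} of dᵢ and d₋ = max over {i : dᵢ < 0} of dᵢ, and both sets are nonempty. Then there exists a unique h ∈ (d₋, d₊) such that ∑ᵢ 1/(dᵢ - h) = 0. -/
import Mathlib

open Finset Set

theorem harmonic_point_exists_unique (m : ℕ) (d : Fin m → ℝ) (dm dp : ℝ)
    (hdm : dm < 0) (hdp : 0 < dp)
    (hsep : ∀ i, d i ≤ dm ∨ dp ≤ d i)
    (hattp : ∃ i, d i = dp) (hattm : ∃ i, d i = dm)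
    (hminp : ∀ i, 0 < d i → dp ≤ d i)
    (hmaxm : ∀ i, d i < 0 → d i ≤ dm) :
    ∃! h : ℝ, h ∈ Set.Ioo dm dp ∧ ∑ i, 1 / (d i - h) = 0 := by
  classical
  obtain ⟨ip, hip⟩ := hattp
  obtain ⟨im, him⟩ := hattm
  have hmne : Nonempty (Fin m) := ⟨ip⟩
  have hm0 : 0 < (m : ℝ) := by exact_mod_cast ip.pos
  set f : ℝ → ℝ := fun h => ∑ i, 1 / (d i - h) with hf
  have hne : ∀ i : Fin m, ∀ h ∈ Set.Ioo dm dp, d i - h ≠ 0 := by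
    intro i h hh
    rcases hsep i with h1 | h1
    · exact sub_ne_zero.mpr (ne_of_lt (lt_of_le_of_lt h1 hh.1))
    · exact sub_ne_zero.mpr (ne_of_gt (lt_of_lt_of_le hh.2 h1))
  have hcont : ContinuousOn f (Set.Ioo dm dp) := by
    apply continuousOn_finset_sum
    intro i _
    exact continuousOn_const.div
      ((continuous_const.sub continuous_id).continuousOn) (fun h hh => hne i h hh)
  have hmono : StrictMonoOn f (Set.Ioo dm dp) := by
    intro a ha b hb hab
    apply Finset.sum_lt_sum_of_nonempty univ_nonempty
    intro i _
    rcases hsep i with h1 | h1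
    · have hda : d i - a < 0 := by linarith [ha.1]
      have hdb : d i - b < d i - a := by linarith
      exact one_div_lt_one_div_of_neg_of_lt hda hdb
    · have hdb : 0 < d i - b := by linarith [hb.2]
      have hdab : d i - b < d i - a := by linarith
      exact one_div_lt_one_div_of_lt hdb hdab
  have hcardm : ((univ.erase im).card : ℝ) ≤ m := by
    have : (univ.erase im).card ≤ m := by
      calc (univ.erase im).card ≤ univ.card := Finset.card_le_card (Finset.erase_subset _ _)
        _ = m := by simp
    exact_mod_cast this
  have hcardp : ((univ.erase ip).card : ℝ) ≤ m := by
    have : (univ.erase ip).card ≤ m := by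
      calc (univ.erase ip).card ≤ univ.card := Finset.card_le_card (Finset.erase_subset _ _)
        _ = m := by simp
    exact_mod_cast this
  have bound1 : ∀ h, dm < h → h < 0 → f h ≤ 1 / (dm - h) + m * (1 / dp) := by
    intro h h1 h2
    have key : ∀ i ∈ univ.erase im, 1 / (d i - h) ≤ 1 / dp := by
      intro i _
      rcases hsep i with hc | hc
      · have h3 : d i - h < 0 := by linarith
        have h4 : 1 / (d i - h) < 0 := one_div_neg.mpr h3
        linarith [one_div_pos.mpr hdp]
      · have h4 : dp ≤ d i - h := by linarith
        exact one_div_le_one_div_of_le hdp h4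
    have split : f h = 1 / (d im - h) + ∑ i ∈ univ.erase im, 1 / (d i - h) :=
      (Finset.add_sum_erase _ _ (mem_univ im)).symm
    have hsum : ∑ i ∈ univ.erase im, 1 / (d i - h) ≤ (univ.erase im).card • (1 / dp) :=
      Finset.sum_le_card_nsmul _ _ _ key
    rw [split, him]
    have : ((univ.erase im).card : ℝ) * (1 / dp) ≤ m * (1 / dp) := by
      apply mul_le_mul_of_nonneg_right hcardm (by positivity)
    rw [nsmul_eq_mul] at hsum
    linarith
  have bound2 : ∀ h, 0 < h → h < dp → 1 / (dp - h) + m * (1 / dm) ≤ f h := by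
    intro h h1 h2
    have key : ∀ i ∈ univ.erase ip, 1 / dm ≤ 1 / (d i - h) := by
      intro i _
      rcases hsep i with hc | hc
      · have h4 : d i - h ≤ dm := by linarith
        exact one_div_le_one_div_of_neg_of_le hdm h4
      · have h3 : 0 < d i - h := by linarith
        have h4 : 0 ≤ 1 / (d i - h) := by positivity
        have h5 : 1 / dm < 0 := one_div_neg.mpr hdm
        linarith
    have split : f h = 1 / (d ip - h) + ∑ i ∈ univ.erase ip, 1 / (d i - h) :=
      (Finset.add_sum_erase _ _ (mem_univ ip)).symm
    have hsum : (univ.erase ip).card • (1 / dm) ≤ ∑ i ∈ univ.erase ip, 1 / (d i - h) :=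
      Finset.card_nsmul_le_sum _ _ _ key
    rw [split, hip]
    have : m * (1 / dm) ≤ ((univ.erase ip).card : ℝ) * (1 / dm) := by
      have h5 : 1 / dm ≤ 0 := (one_div_neg.mpr hdm).le
      exact mul_le_mul_of_nonpos_right hcardp h5
    rw [nsmul_eq_mul] at hsum
    linarith
  -- choose a near dm with f a < 0
  set ε₁ : ℝ := min (dp / (2 * m)) (-dm / 2) with hε₁def
  have hε₁ : 0 < ε₁ := lt_min (by positivity) (by linarith)
  set a : ℝ := dm + ε₁ with hadef
  have ha1 : dm < a := by simp [hadef]; linarith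
  have ha2 : a < 0 := by
    have := min_le_right (dp / (2 * m)) (-dm / 2)
    have : ε₁ ≤ -dm / 2 := this
    simp only [hadef]; linarith
  have hfa : f a < 0 := by
    have hb := bound1 a ha1 ha2
    have hεle : ε₁ ≤ dp / (2 * m) := min_le_left _ _
    have h1 : 1 / (dp / (2 * m)) ≤ 1 / ε₁ := one_div_le_one_div_of_le hε₁ hεle
    have h2 : 1 / (dp / (2 * m)) = 2 * m / dp := by
      rw [one_div_div]
    have h3 : dm - a = -ε₁ := by rw [hadef]; ring
    rw [h3] at hb
    have h4 : 1 / (-ε₁) = -(1 / ε₁) := by rw [one_div_neg_eq_neg_one_div]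
    rw [h4] at hb
    have h5 : 0 < m * (1 / dp) := by positivity
    have h6 : 2 * m / dp = 2 * (m * (1 / dp)) := by ring
    nlinarith
  -- choose b near dp with f b > 0
  set ε₂ : ℝ := min (-dm / (2 * m)) (dp / 2) with hε₂def
  have hε₂ : 0 < ε₂ := lt_min (div_pos (by linarith) (by positivity)) (by linarith)
  set b : ℝ := dp - ε₂ with hbdef
  have hb1 : b < dp := by simp [hbdef]; linarith
  have hb2 : 0 < b := by
    have : ε₂ ≤ dp / 2 := min_le_right _ _
    simp only [hbdef]; linarith
  have hfb : 0 < f b := by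
    have hb' := bound2 b hb2 hb1
    have hεle : ε₂ ≤ -dm / (2 * m) := min_le_left _ _
    have h1 : 1 / (-dm / (2 * m)) ≤ 1 / ε₂ := one_div_le_one_div_of_le hε₂ hεle
    have h2 : 1 / (-dm / (2 * m)) = 2 * m / (-dm) := by rw [one_div_div]
    have h3 : dp - b = ε₂ := by simp [hbdef]
    rw [h3] at hb'
    have h5 : m * (1 / dm) < 0 := by
      apply mul_neg_of_pos_of_neg hm0 (one_div_neg.mpr hdm)
    have h6 : 2 * m / (-dm) = -(2 * (m * (1 / dm))) := by
      rw [div_neg]; ring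
    nlinarith
  have hab : a < b := by linarith
  have haIoo : a ∈ Set.Ioo dm dp := ⟨ha1, by linarith⟩
  have hbIoo : b ∈ Set.Ioo dm dp := ⟨by linarith, hb1⟩
  have hsub : Set.Icc a b ⊆ Set.Ioo dm dp :=
    fun x hx => ⟨lt_of_lt_of_le ha1 hx.1, lt_of_le_of_lt hx.2 hb1⟩
  have hIVT := intermediate_value_Ioo hab.le (hcont.mono hsub)
  obtain ⟨h0, hh0, hfh0⟩ := hIVT ⟨hfa, hfb⟩
  have hh0' : h0 ∈ Set.Ioo dm dp := ⟨lt_of_lt_of_le ha1 hh0.1.le, lt_of_le_of_lt hh0.2.le hb1⟩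
  refine ⟨h0, ⟨hh0', hfh0⟩, ?_⟩
  rintro y ⟨hy, hfy⟩
  exact hmono.injOn hy hh0' (hfy.trans hfh0.symm)
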